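/- arXiv:1512.07290 — 2 statements merged into one kernel-verified Lean document; each statement's English description precedes it below -/
import Mathlib

section
/- Let n ≥ 1. For almost every z ∈ ℂⁿ (with respect to Lebesgue measure on ℂⁿ) and for every ε > 0, there exists a constant κ > 0 such that for all p ∈ ℤ and all q ∈ ℤⁿ with q ≠ 0, |p + z·q| > κ·(‖q‖∞)^{−(n−1+ε)/2}. -/
open MeasureTheory Metric
open scoped ENNReal

/-!
Fix `s = (n - 1 + ε) / 2` and restrict `z` to a ball of radius `R`. For `q ≠ 0`, slicing along a
coordinate with `|qᵢ| = ‖q‖∞` shows that `{z : |p + z·q| ≤ r}` meets the ball in volume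
`O((r / ‖q‖∞)²)`, and only `O(‖q‖∞)` integers `p` give a nonempty intersection. With
`r = δ ‖q‖∞ ^ (-s)` the union over all `(p, q)` therefore has volume `O(δ² ∑_q ‖q‖∞ ^ (-(n + ε)))`,
a convergent lattice sum. Letting `δ → 0`, the points `z` admitting no `κ` form a null set.
-/

section IntegerVectors

variable {ι : Type*} [Fintype ι]

theorem pi_norm_eq_sup_natAbs (q : ι → ℤ) :
    ‖q‖ = ((Finset.univ.sup fun i => (q i).natAbs : ℕ) : ℝ) := by
  rw [Pi.norm_def, ← NNReal.coe_natCast, Nat.cast_finsetSup]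
  congr 2
  ext i
  simp [Int.norm_eq_abs]

theorem one_le_pi_norm_of_ne_zero {q : ι → ℤ} (hq : q ≠ 0) : 1 ≤ ‖q‖ := by
  obtain ⟨i, hi⟩ := Function.ne_iff.1 hq
  calc (1 : ℝ) ≤ ‖q i‖ := by rw [Int.norm_eq_abs]; exact_mod_cast Int.one_le_abs hi
    _ ≤ ‖q‖ := norm_le_pi_norm q i

theorem pi_norm_intCast (q : ι → ℤ) : ‖fun i => (q i : ℂ)‖ = ‖q‖ := by
  simp [Pi.norm_def]

theorem summable_pi_norm_rpow_int {t : ℝ} (ht : Fintype.card ι < t) :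
    Summable fun q : ι → ℤ => ‖q‖ ^ (-t) := by
  let L := Submodule.span ℤ (Set.range (Pi.basisFun ℝ ι))
  have hL := ZLattice.summable_norm_rpow L (-t)
    (by rw [Module.finrank_eq_card_basis ((Pi.basisFun ℝ ι).restrictScalars ℤ)]; linarith)
  have hmem (q : ι → ℤ) : (fun i => (q i : ℝ)) ∈ L := by
    rw [Module.Basis.mem_span_iff_repr_mem]
    simp
  refine (hL.comp_injective (i := fun q => ⟨fun i => (q i : ℝ), hmem q⟩) ?_).congr fun q => ?_
  · intro q q' h
    funext i
    simpa using congrFun (congrArg Subtype.val h) i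
  · have (m : ℤ) : ‖(m : ℝ)‖₊ = ‖m‖₊ := NNReal.eq (Int.norm_cast_real m)
    simp [Pi.norm_def, this]

end IntegerVectors

theorem norm_sum_mul_le_card_mul {ι R : Type*} [Fintype ι] [SeminormedRing R] (z w : ι → R) :
    ‖∑ i, z i * w i‖ ≤ Fintype.card ι * (‖z‖ * ‖w‖) := by
  calc ‖∑ i, z i * w i‖ ≤ ∑ i, ‖z i‖ * ‖w i‖ :=
        (norm_sum_le _ _).trans (Finset.sum_le_sum fun i _ => norm_mul_le _ _)
    _ ≤ ∑ _i : ι, ‖z‖ * ‖w‖ := by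
        gcongr with i
        exacts [norm_le_pi_norm z i, norm_le_pi_norm w i]
    _ = _ := by simp

theorem tsum_int_le_of_eq_zero_of_lt_abs (f : ℤ → ℝ≥0∞) {c : ℝ≥0∞} {X : ℝ} (hX : 0 ≤ X)
    (hf : ∀ p, f p ≤ c) (hf₀ : ∀ p : ℤ, X < |(p : ℝ)| → f p = 0) :
    ∑' p, f p ≤ ENNReal.ofReal (2 * X + 1) * c := by
  set M := ⌊X⌋
  have hM : 0 ≤ M := Int.floor_nonneg.2 hX
  rw [tsum_eq_sum (s := Finset.Icc (-M) M) fun p hp => hf₀ p ?_]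
  · calc ∑ p ∈ Finset.Icc (-M) M, f p ≤ (Finset.Icc (-M) M).card • c :=
          Finset.sum_le_card_nsmul _ _ _ fun p _ => hf p
      _ ≤ ENNReal.ofReal (2 * X + 1) * c := by
          rw [nsmul_eq_mul]
          gcongr
          rw [Int.card_Icc, ← ENNReal.ofReal_natCast]
          gcongr
          have : ((M + 1 - -M).toNat : ℝ) = 2 * M + 1 := by
            rw [show M + 1 - -M = 2 * M + 1 by ring]
            exact_mod_cast Int.toNat_of_nonneg (by omega)
          rw [this]
          linarith [Int.floor_le X]
  · rw [Finset.mem_Icc, ← abs_le, not_le] at hp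
    have := Int.lt_floor_add_one X
    have : (M : ℝ) + 1 ≤ |(p : ℝ)| := by rw [← Int.cast_abs]; exact_mod_cast hp
    linarith

theorem volume_slab_inter_closedBall_le {m : ℕ} (w : Fin (m + 1) → ℂ) {i : Fin (m + 1)}
    (hi : w i ≠ 0) (a : ℂ) (r R : ℝ) :
    volume ({z : Fin (m + 1) → ℂ | ‖a + ∑ j, z j * w j‖ ≤ r} ∩ closedBall 0 R) ≤
      ENNReal.ofReal (r / ‖w i‖) ^ 2 * NNReal.pi * volume (closedBall (0 : Fin m → ℂ) R) := by
  set e := MeasurableEquiv.piFinSuccAbove (fun _ : Fin (m + 1) => ℂ) i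
  set c : (Fin m → ℂ) → ℂ := fun y => a + ∑ j, y j * w (i.succAbove j)
  set T : Set (ℂ × (Fin m → ℂ)) := {x | ‖x.1 * w i + c x.2‖ ≤ r} ∩ {x | ‖x.2‖ ≤ R}
  have hT : MeasurableSet T :=
    ((isClosed_le (by fun_prop) continuous_const).inter
      (isClosed_le (by fun_prop) continuous_const)).measurableSet
  have hsub : {z : Fin (m + 1) → ℂ | ‖a + ∑ j, z j * w j‖ ≤ r} ∩ closedBall 0 R ⊆ e ⁻¹' T := by
    rintro z ⟨hz, hzR⟩
    refine ⟨?_, ?_⟩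
    · simpa [e, c, T, Fin.sum_univ_succAbove _ i, Fin.removeNth_apply, add_left_comm] using hz
    · exact (pi_norm_le_iff_of_nonneg (norm_nonneg z)).2 (fun j => norm_le_pi_norm z _) |>.trans
        (mem_closedBall_zero_iff.1 hzR)
  have hslice (y : Fin m → ℂ) : volume ((fun x => (x, y)) ⁻¹' T) ≤
      (closedBall 0 R).indicator (fun _ => ENNReal.ofReal (r / ‖w i‖) ^ 2 * NNReal.pi) y := by
    by_cases hy : ‖y‖ ≤ R
    · rw [Set.indicator_of_mem (mem_closedBall_zero_iff.2 hy),
        ← Complex.volume_closedBall (-c y / w i)]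
      refine measure_mono fun x hx => ?_
      have hx : ‖x * w i + c y‖ ≤ r := hx.1
      rw [mem_closedBall, dist_eq_norm, le_div_iff₀ (norm_pos_iff.2 hi), ← norm_mul]
      have hfactor : (x - -c y / w i) * w i = x * w i + c y := by field_simp; ring
      rwa [hfactor]
    · rw [Set.indicator_of_notMem (by simpa using hy)]
      exact (measure_mono fun x hx => hy hx.2).trans_eq measure_empty
  calc volume ({z : Fin (m + 1) → ℂ | ‖a + ∑ j, z j * w j‖ ≤ r} ∩ closedBall 0 R)
      ≤ volume (e ⁻¹' T) := measure_mono hsub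
    _ = volume T :=
        (volume_preserving_piFinSuccAbove (fun _ => ℂ) i).measure_preimage hT.nullMeasurableSet
    _ = ∫⁻ y, volume ((fun x => (x, y)) ⁻¹' T) := by
        rw [Measure.volume_eq_prod]
        exact Measure.prod_apply_symm hT
    _ ≤ ∫⁻ y, (closedBall 0 R).indicator
          (fun _ => ENNReal.ofReal (r / ‖w i‖) ^ 2 * NNReal.pi) y := lintegral_mono hslice
    _ = _ := lintegral_indicator_const measurableSet_closedBall _

theorem exists_volume_slab_inter_closedBall_le (n : ℕ) (R : ℝ) :
    ∃ C : ℝ≥0∞, C ≠ ⊤ ∧ ∀ w : Fin n → ℂ, w ≠ 0 → ∀ (a : ℂ) (r : ℝ),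
      volume ({z : Fin n → ℂ | ‖a + ∑ j, z j * w j‖ ≤ r} ∩ closedBall 0 R) ≤
        ENNReal.ofReal (r / ‖w‖) ^ 2 * C := by
  cases n with
  | zero => exact ⟨0, ENNReal.zero_ne_top, fun w hw => absurd (Subsingleton.elim w 0) hw⟩
  | succ m =>
    refine ⟨NNReal.pi * volume (closedBall (0 : Fin m → ℂ) R),
      ENNReal.mul_ne_top ENNReal.coe_ne_top measure_closedBall_lt_top.ne, fun w hw a r => ?_⟩
    obtain ⟨i, -, hi⟩ :=
      Finset.exists_mem_eq_sup Finset.univ Finset.univ_nonempty fun j => ‖w j‖₊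
    have hwi : ‖w i‖ = ‖w‖ := by rw [Pi.norm_def, hi]; rfl
    rw [← hwi, ← mul_assoc]
    exact volume_slab_inter_closedBall_le w (norm_ne_zero_iff.1 (hwi ▸ norm_ne_zero_iff.2 hw)) a r R

theorem exists_tsum_volume_slab_inter_closedBall_le (n : ℕ) {R : ℝ} (hR : 0 ≤ R) :
    ∃ C : ℝ≥0∞, C ≠ ⊤ ∧ ∀ q : Fin n → ℤ, q ≠ 0 → ∀ r : ℝ, 0 ≤ r → r ≤ 1 →
      ∑' p : ℤ, volume ({z : Fin n → ℂ | ‖(p : ℂ) + ∑ i, z i * q i‖ ≤ r} ∩ closedBall 0 R) ≤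
        ENNReal.ofReal (r ^ 2 / ‖q‖) * C := by
  obtain ⟨C, hC, hslab⟩ := exists_volume_slab_inter_closedBall_le n R
  refine ⟨ENNReal.ofReal (2 * n * R + 3) * C, ENNReal.mul_ne_top ENNReal.ofReal_ne_top hC,
    fun q hq r hr₀ hr₁ => ?_⟩
  have hq₁ := one_le_pi_norm_of_ne_zero hq
  have hw : ‖fun i => (q i : ℂ)‖ = ‖q‖ := pi_norm_intCast q
  set X := r + n * (R * ‖q‖)
  have hempty (p : ℤ) (hp : X < |(p : ℝ)|) :
      {z : Fin n → ℂ | ‖(p : ℂ) + ∑ i, z i * q i‖ ≤ r} ∩ closedBall 0 R = ∅ := by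
    refine Set.eq_empty_iff_forall_notMem.2 fun z ⟨hz, hzR⟩ => hp.not_ge ?_
    have hsum := norm_sum_mul_le_card_mul z fun i => (q i : ℂ)
    rw [hw, Fintype.card_fin] at hsum
    have hzR : ‖z‖ ≤ R := mem_closedBall_zero_iff.1 hzR
    calc |(p : ℝ)| = ‖((p : ℂ) + ∑ i, z i * q i) - ∑ i, z i * q i‖ := by simp
      _ ≤ r + n * (‖z‖ * ‖q‖) := (norm_sub_le _ _).trans (add_le_add hz hsum)
      _ ≤ r + n * (R * ‖q‖) := by gcongr
  calc ∑' p : ℤ, volume ({z : Fin n → ℂ | ‖(p : ℂ) + ∑ i, z i * q i‖ ≤ r} ∩ closedBall 0 R)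
      ≤ ENNReal.ofReal (2 * X + 1) * (ENNReal.ofReal (r / ‖q‖) ^ 2 * C) := by
        refine tsum_int_le_of_eq_zero_of_lt_abs _ (by positivity) (fun p => ?_)
          fun p hp => by rw [hempty p hp, measure_empty]
        rw [← hw]
        exact hslab _ (fun h => hq (funext fun i => by simpa using congrFun h i)) _ r
    _ = ENNReal.ofReal ((2 * X + 1) * (r / ‖q‖) ^ 2) * C := by
        rw [← ENNReal.ofReal_pow (by positivity), ← mul_assoc, ← ENNReal.ofReal_mul (by positivity)]
    _ ≤ ENNReal.ofReal ((2 * n * R + 3) * (r ^ 2 / ‖q‖)) * C := by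
        gcongr ENNReal.ofReal ?_ * C
        calc (2 * X + 1) * (r / ‖q‖) ^ 2 = (2 * X + 1) / ‖q‖ * (r ^ 2 / ‖q‖) := by ring
          _ ≤ (2 * n * R + 3) * (r ^ 2 / ‖q‖) := by
            gcongr
            rw [div_le_iff₀ (by linarith)]
            linarith
    _ = ENNReal.ofReal (r ^ 2 / ‖q‖) * (ENNReal.ofReal (2 * n * R + 3) * C) := by
        rw [ENNReal.ofReal_mul (by positivity)]
        ring

def approxSet (n : ℕ) (s δ : ℝ) : Set (Fin n → ℂ) :=
  ⋃ (q : Fin n → ℤ) (_ : q ≠ 0) (p : ℤ), {z | ‖(p : ℂ) + ∑ i, z i * q i‖ ≤ δ * ‖q‖ ^ (-s)}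

theorem approxSet_subset_approxSet {n : ℕ} {s s' δ : ℝ} (hs : s ≤ s') (hδ : 0 ≤ δ) :
    approxSet n s' δ ⊆ approxSet n s δ := by
  simp only [approxSet, Set.iUnion_subset_iff]
  intro q hq p z hz
  refine Set.mem_iUnion₂.2 ⟨q, hq, Set.mem_iUnion.2 ⟨p, ?_⟩⟩
  refine le_trans (b := δ * ‖q‖ ^ (-s')) hz ?_
  gcongr
  exact one_le_pi_norm_of_ne_zero hq

theorem volume_approxSet_inter_closedBall_le {n : ℕ} {s : ℝ} (hs₀ : 0 ≤ s) (hs : n < 2 * s + 1)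
    {R : ℝ} (hR : 0 ≤ R) :
    ∃ C : ℝ≥0∞, C ≠ ⊤ ∧ ∀ δ : ℝ, 0 ≤ δ → δ ≤ 1 →
      volume (approxSet n s δ ∩ closedBall 0 R) ≤ ENNReal.ofReal (δ ^ 2) * C := by
  obtain ⟨C, hC, hsum⟩ := exists_tsum_volume_slab_inter_closedBall_le n hR
  have hS := summable_pi_norm_rpow_int (ι := Fin n) (t := 2 * s + 1) (by simpa using hs)
  refine ⟨ENNReal.ofReal (∑' q : Fin n → ℤ, ‖q‖ ^ (-(2 * s + 1))) * C,
    ENNReal.mul_ne_top ENNReal.ofReal_ne_top hC, fun δ hδ₀ hδ₁ => ?_⟩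
  have hq (q : Fin n → ℤ) :
      volume ((⋃ (_ : q ≠ 0) (p : ℤ),
        {z : Fin n → ℂ | ‖(p : ℂ) + ∑ i, z i * q i‖ ≤ δ * ‖q‖ ^ (-s)}) ∩ closedBall 0 R) ≤
        ENNReal.ofReal (δ ^ 2 * ‖q‖ ^ (-(2 * s + 1))) * C := by
    rcases eq_or_ne q 0 with rfl | hq
    · simp
    have hq₁ := one_le_pi_norm_of_ne_zero hq
    have hpow : ‖q‖ ^ (-s) ≤ 1 := Real.rpow_le_one_of_one_le_of_nonpos hq₁ (by linarith)
    have hexp : (δ * ‖q‖ ^ (-s)) ^ 2 / ‖q‖ = δ ^ 2 * ‖q‖ ^ (-(2 * s + 1)) := by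
      rw [mul_pow, ← Real.rpow_natCast (‖q‖ ^ (-s)), ← Real.rpow_mul (by positivity), mul_div_assoc,
        ← Real.rpow_sub_one (by positivity)]
      congr 2
      push_cast
      ring
    simp only [ne_eq, hq, not_false_eq_true, Set.iUnion_true, Set.iUnion_inter]
    rw [← hexp]
    exact (measure_iUnion_le _).trans (hsum q hq _ (by positivity)
      (mul_le_one₀ hδ₁ (by positivity) hpow))
  calc volume (approxSet n s δ ∩ closedBall 0 R)
      ≤ ∑' q : Fin n → ℤ, ENNReal.ofReal (δ ^ 2 * ‖q‖ ^ (-(2 * s + 1))) * C := by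
        rw [approxSet, Set.iUnion_inter]
        exact (measure_iUnion_le _).trans (ENNReal.tsum_le_tsum hq)
    _ = ENNReal.ofReal (δ ^ 2) * (ENNReal.ofReal (∑' q : Fin n → ℤ, ‖q‖ ^ (-(2 * s + 1))) * C) := by
        rw [ENNReal.tsum_mul_right, ← ENNReal.ofReal_tsum_of_nonneg (fun _ => by positivity)
          (hS.mul_left _), tsum_mul_left, ENNReal.ofReal_mul (by positivity), mul_assoc]

theorem volume_iInter_approxSet_eq_zero {n : ℕ} {s : ℝ} (hs₀ : 0 ≤ s) (hs : n < 2 * s + 1) :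
    volume (⋂ (δ : ℝ) (_ : 0 < δ), approxSet n s δ) = 0 := by
  rw [← iUnion_inter_closedBall_nat (⋂ (δ : ℝ) (_ : 0 < δ), approxSet n s δ) 0]
  refine measure_iUnion_null fun R => le_antisymm ?_ bot_le
  obtain ⟨C, hC, hle⟩ := volume_approxSet_inter_closedBall_le hs₀ hs R.cast_nonneg
  have hlim : Filter.Tendsto (fun δ : ℝ => ENNReal.ofReal (δ ^ 2) * C) (nhdsWithin 0 (Set.Ioi 0))
      (nhds 0) := by
    have := ENNReal.Tendsto.mul_const
      ((ENNReal.continuous_ofReal.comp (continuous_pow 2)).tendsto 0) (Or.inr hC)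
    simpa using this.mono_left nhdsWithin_le_nhds
  refine ge_of_tendsto hlim ?_
  filter_upwards [Ioc_mem_nhdsGT one_pos] with δ ⟨hδ₀, hδ₁⟩
  exact (measure_mono (Set.inter_subset_inter_left _ (Set.iInter₂_subset δ hδ₀))).trans
    (hle δ hδ₀.le hδ₁)

/-- For almost every `z ∈ ℂⁿ` and every `ε > 0`, there is a constant `κ > 0` with
`|p + z·q| > κ ‖q‖∞ ^ (-(n - 1 + ε)/2)` for all `p ∈ ℤ` and all nonzero `q ∈ ℤⁿ`. -/
theorem stmt_6 (n : ℕ) (hn : 1 ≤ n) :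
    ∀ᵐ z : Fin n → ℂ ∂volume, ∀ ε : ℝ, 0 < ε → ∃ κ : ℝ, 0 < κ ∧
      ∀ (p : ℤ) (q : Fin n → ℤ), q ≠ 0 →
        κ * ((Finset.univ.sup fun i => (q i).natAbs : ℕ) : ℝ) ^
            (-(((n : ℝ) - 1 + ε) / 2)) <
          ‖(p : ℂ) + ∑ i, z i * (q i : ℂ)‖ := by
  have hn' : (1 : ℝ) ≤ n := by exact_mod_cast hn
  have hae : ∀ᵐ z : Fin n → ℂ, ∀ k : ℕ,
      z ∉ ⋂ (δ : ℝ) (_ : 0 < δ), approxSet n (((n : ℝ) - 1 + 1 / (k + 1)) / 2) δ :=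
    ae_all_iff.2 fun k => measure_eq_zero_iff_ae_notMem.1 <|
      volume_iInter_approxSet_eq_zero (by positivity)
        (by linarith [Nat.one_div_pos_of_nat (α := ℝ) (n := k)])
  filter_upwards [hae] with z hz ε hε
  obtain ⟨k, hk⟩ := exists_nat_one_div_lt hε
  obtain ⟨κ, hκ, hzκ⟩ : ∃ κ : ℝ, 0 < κ ∧ z ∉ approxSet n (((n : ℝ) - 1 + ε) / 2) κ := by
    simp only [Set.mem_iInter, not_forall] at hz
    obtain ⟨κ, hκ, hzκ⟩ := hz k
    exact ⟨κ, hκ, fun h => hzκ (approxSet_subset_approxSet (by linarith) hκ.le h)⟩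
  refine ⟨κ, hκ, fun p q hq => ?_⟩
  rw [← pi_norm_eq_sup_natAbs]
  by_contra! h
  exact hzκ (Set.mem_iUnion₂.2 ⟨q, hq, Set.mem_iUnion.2 ⟨p, h⟩⟩)
end

section
/- Let G be an m×l complex matrix and let c ≥ 0 be a real number. Then det(I_m + 2c·G·Gᴴ) and det(I_m + c·G·Gᴴ) are positive real numbers, and log₂ det(I_m + 2c·G·Gᴴ) − log₂ det(I_m + c·G·Gᴴ) ≤ l. -/
open Matrix

/-!
By Sylvester's identity `det (1 + a • G Gᴴ) = det (1 + a • Gᴴ G)`, and diagonalising the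
Hermitian `l × l` matrix `Gᴴ G` writes this as `∏ j, (1 + a μⱼ)` over its eigenvalues `μⱼ ≥ 0`.
Each factor is positive, and `1 + 2cμ ≤ 2 (1 + cμ)` bounds each of the `l` terms of the
difference of logarithms by `1`.
-/

theorem Matrix.IsHermitian.det_one_add_smul {𝕜 n : Type*} [RCLike 𝕜] [Fintype n] [DecidableEq n]
    {H : Matrix n n 𝕜} (hH : H.IsHermitian) (a : ℝ) :
    det (1 + (a : 𝕜) • H) = ∏ i, ((1 + a * hH.eigenvalues i : ℝ) : 𝕜) := by
  set U := hH.eigenvectorUnitary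
  have hdiag : 1 + (a : 𝕜) • H = Unitary.conjStarAlgAut 𝕜 _ U
      (diagonal fun i ↦ ((1 + a * hH.eigenvalues i : ℝ) : 𝕜)) := by
    conv_lhs => rw [hH.spectral_theorem]
    rw [← map_one (Unitary.conjStarAlgAut 𝕜 _ U), ← map_smul, ← map_add]
    congr 1
    ext i j
    by_cases h : i = j <;> simp [h]
  rw [hdiag, Unitary.conjStarAlgAut_apply, det_mul_right_comm, Unitary.mul_star_self_of_mem U.2,
    one_mul, det_diagonal]

theorem det_one_add_smul_mul_conjTranspose {𝕜 m n : Type*} [RCLike 𝕜] [Fintype m] [Fintype n]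
    [DecidableEq m] [DecidableEq n] (G : Matrix m n 𝕜) (a : ℝ) :
    det (1 + (a : 𝕜) • (G * Gᴴ)) =
      ((∏ i, (1 + a * (isHermitian_conjTranspose_mul_self G).eigenvalues i) : ℝ) : 𝕜) := by
  rw [← smul_mul, det_one_add_mul_comm, Matrix.mul_smul, IsHermitian.det_one_add_smul,
    RCLike.ofReal_prod]

theorem Real.logb_two_one_add_two_mul_sub_le {x : ℝ} (hx : 0 ≤ x) :
    logb 2 (1 + 2 * x) - logb 2 (1 + x) ≤ 1 := by
  have hpos : 0 < 1 + x := by linarith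
  have hle : logb 2 (1 + 2 * x) ≤ logb 2 (2 * (1 + x)) :=
    logb_le_logb_of_le one_lt_two (by linarith) (by linarith)
  rw [logb_mul two_ne_zero hpos.ne', logb_self_eq_one one_lt_two] at hle
  linarith

/-- For an `m × l` complex matrix `G` and `c ≥ 0`, the determinants
`det (I_m + 2c • G Gᴴ)` and `det (I_m + c • G Gᴴ)` are positive reals, and
`log₂ det (I_m + 2c • G Gᴴ) - log₂ det (I_m + c • G Gᴴ) ≤ l`. -/
theorem stmt_9 (m l : ℕ) (G : Matrix (Fin m) (Fin l) ℂ) (c : ℝ) (hc : 0 ≤ c) :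
    ((1 + ((2 * c : ℝ) : ℂ) • (G * Gᴴ)).det.im = 0 ∧
      0 < (1 + ((2 * c : ℝ) : ℂ) • (G * Gᴴ)).det.re) ∧
    ((1 + ((c : ℝ) : ℂ) • (G * Gᴴ)).det.im = 0 ∧
      0 < (1 + ((c : ℝ) : ℂ) • (G * Gᴴ)).det.re) ∧
    Real.logb 2 ((1 + ((2 * c : ℝ) : ℂ) • (G * Gᴴ)).det.re) -
        Real.logb 2 ((1 + ((c : ℝ) : ℂ) • (G * Gᴴ)).det.re) ≤ l := by
  set μ := (isHermitian_conjTranspose_mul_self G).eigenvalues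
  have hμ : ∀ j, 0 ≤ μ j := eigenvalues_conjTranspose_mul_self_nonneg G
  have hfactor : ∀ {a : ℝ}, 0 ≤ a → ∀ j, 0 < 1 + a * μ j := fun ha j ↦
    add_pos_of_pos_of_nonneg one_pos (mul_nonneg ha (hμ j))
  have hdet : ∀ a : ℝ, det (1 + (a : ℂ) • (G * Gᴴ)) = ((∏ j, (1 + a * μ j) : ℝ) : ℂ) :=
    det_one_add_smul_mul_conjTranspose G
  have h2c : 0 ≤ 2 * c := by linarith
  simp only [hdet, Complex.ofReal_re]
  refine ⟨⟨Complex.ofReal_im _, Finset.prod_pos fun j _ ↦ hfactor h2c j⟩,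
    ⟨Complex.ofReal_im _, Finset.prod_pos fun j _ ↦ hfactor hc j⟩, ?_⟩
  rw [Real.logb_prod _ _ fun j _ ↦ (hfactor h2c j).ne',
    Real.logb_prod _ _ fun j _ ↦ (hfactor hc j).ne', ← Finset.sum_sub_distrib]
  calc ∑ j, (Real.logb 2 (1 + 2 * c * μ j) - Real.logb 2 (1 + c * μ j))
      ≤ ∑ _j : Fin l, (1 : ℝ) := Finset.sum_le_sum fun j _ ↦ by
        simpa only [mul_assoc] using Real.logb_two_one_add_two_mul_sub_le (mul_nonneg hc (hμ j))
    _ = l := by simp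
end
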